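/- arXiv:2107.04368 — 3 statements merged into one kernel-verified Lean document; each statement's English description precedes it below -/
import Mathlib

section
/- Let G=(W,E) be a simple undirected graph with W={w_1,…,w_{3q}}, let (N,V) be the instance of 3D-SR-AS-BIN constructed from G by the reduction, and let M be a stable matching in (N,V) with |M| = |N|/3. Then u_{a_i^s}(M) = 0 for every 1 ≤ i ≤ 3q and every s ∈ {1,2}. -/
open Finset

variable {A : Type*}

/-- `M` is a matching on agent set `N`: a set of pairwise disjoint triples of agents of `N`. -/
def IsMatching [DecidableEq A] (N : Finset A) (M : Finset (Finset A)) : Prop :=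
  (∀ t ∈ M, t.card = 3 ∧ t ⊆ N) ∧ ∀ t ∈ M, ∀ s ∈ M, t ≠ s → Disjoint t s

/-- The (additively separable) utility of agent `a` in matching `M` under valuations `val`:
the sum, over the triples of `M` containing `a`, of the valuations by `a` of the other
members; this is `0` if `a` is unmatched, and for a genuine matching it is the sum of the
valuations of `a`'s two partners. -/
def utility [DecidableEq A] (val : A → A → ℤ) (M : Finset (Finset A)) (a : A) : ℤ :=
  ∑ t ∈ M.filter (fun t => a ∈ t), ∑ b ∈ t.erase a, val a b

/-- The triple consisting of the three distinct agents `x, y, z` of `N` blocks `M`. -/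
def Blocks [DecidableEq A] (N : Finset A) (val : A → A → ℤ) (M : Finset (Finset A))
    (x y z : A) : Prop :=
  x ∈ N ∧ y ∈ N ∧ z ∈ N ∧ x ≠ y ∧ x ≠ z ∧ y ≠ z ∧
  utility val M x < val x y + val x z ∧
  utility val M y < val y x + val y z ∧
  utility val M z < val z x + val z y

/-- `M` is stable: no triple of agents of `N` blocks it. -/
def IsStable [DecidableEq A] (N : Finset A) (val : A → A → ℤ) (M : Finset (Finset A)) : Prop :=
  ∀ x y z : A, ¬ Blocks N val M x y z

/-- Binary symmetric preferences on `N`. -/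
def BinSym [DecidableEq A] (N : Finset A) (val : A → A → ℤ) : Prop :=
  (∀ a ∈ N, ∀ b ∈ N, a ≠ b → val a b = 0 ∨ val a b = 1) ∧
  (∀ a ∈ N, ∀ b ∈ N, val a b = val b a)

/-- A `P`-matching: a matching in which every matched agent has strictly positive utility. -/
def IsPMatching [DecidableEq A] (N : Finset A) (val : A → A → ℤ)
    (M : Finset (Finset A)) : Prop :=
  IsMatching N M ∧ ∀ a : A, (∃ t ∈ M, a ∈ t) → 0 < utility val M a

/-- `x, y, z` form a triangle: three distinct agents of `N` whose pairwise valuations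
all equal `1`. -/
def IsTriangle [DecidableEq A] (N : Finset A) (val : A → A → ℤ) (x y z : A) : Prop :=
  x ∈ N ∧ y ∈ N ∧ z ∈ N ∧ x ≠ y ∧ x ≠ z ∧ y ≠ z ∧
  val x y = 1 ∧ val y z = 1 ∧ val x z = 1

/-- The instance contains no triangle. -/
def TriangleFree [DecidableEq A] (N : Finset A) (val : A → A → ℤ) : Prop :=
  ∀ x y z : A, ¬ IsTriangle N val x y z

open Finset

/-- The agents of the instance constructed by the reduction from
Partition Into Triangles: `a i s` (for `s : Fin 2`), `b i` for each vertex `i`,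
and pentagadget agents `p r t` (`t : Fin 5`, representing `p_r^{t+1}`). -/
inductive Agent (q : ℕ) : Type where
  | a : Fin (3*q) → Fin 2 → Agent q
  | b : Fin (3*q) → Agent q
  | p : Fin (6*q) → Fin 5 → Agent q
  deriving DecidableEq, Fintype

/-- The valuation function of the instance constructed by the reduction from the graph `G`.
Note that, within a pentagadget, `p_r^t` assigns valuation `1` exactly to
`p_r^{t+1}, p_r^{t+2}, p_r^{t+4}` (indices mod 5). -/
def redVal (q : ℕ) (G : SimpleGraph (Fin (3*q))) [DecidableRel G.Adj] :
    Agent q → Agent q → ℤ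
  | .a i s, .a j s' => if i = j ∧ s ≠ s' then 1 else 0
  | .a i _, .b j => if i = j then 1 else 0
  | .b i, .a j _ => if i = j then 1 else 0
  | .b i, .b j => if G.Adj i j then 1 else 0
  | .p r t, .p r' t' => if r = r' ∧ (t' - t = 1 ∨ t' - t = 2 ∨ t' - t = 4) then 1 else 0
  | _, _ => 0

/-- A partition of the vertices of `G` into triangles. -/
def IsTrianglePartition {n : ℕ} (G : SimpleGraph (Fin n))
    (X : Finset (Finset (Fin n))) : Prop :=
  (∀ t ∈ X, t.card = 3 ∧ ∀ u ∈ t, ∀ v ∈ t, u ≠ v → G.Adj u v) ∧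
  (∀ t ∈ X, ∀ s ∈ X, t ≠ s → Disjoint t s) ∧
  ∀ v : Fin n, ∃ t ∈ X, v ∈ t

/-!
In a stable matching each pentagadget splits as a triple `{p^t, p^{t+1}, p^{t+2}}` of `M`
together with a pair `p^{t+3}, p^{t+4}` sharing a triple: for every other grouping of the five
gadget agents some consecutive triple `{p^s, p^{s+1}, p^{s+2}}` blocks (a finite check). The third
member of the pair's triple is not a gadget agent, and it is not `b_j`, since then `b_j` would
have utility `0` while `a_j^1, a_j^2` have utility at most `1`, and `{a_j^1, a_j^2, b_j}` would
block. So each of the `6q` gadgets claims its own `a`-agent; as there are exactly `6q` of them,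
every `a`-agent shares its triple with two pentagadget agents, whom it values `0`.
-/

namespace Pentagon

def Likes (t s : Fin 5) : Prop := s - t = 1 ∨ s - t = 2 ∨ s - t = 4

instance : DecidableRel Likes := fun _ _ => by unfold Likes; infer_instance

def arc (t : Fin 5) : Finset (Fin 5) := {t, t + 1, t + 2}

-- `R s s'` is read as: agents `p^s` and `p^{s'}` of one pentagadget share a triple of the matching.
variable (R : Fin 5 → Fin 5 → Prop) [DecidableRel R]

def likedMates (t : Fin 5) : ℕ := #{s | R t s ∧ Likes t s}

def IsBlockingArc (t : Fin 5) : Prop :=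
  likedMates R t < 2 ∧ likedMates R (t + 1) < 2 ∧ likedMates R (t + 2) = 0

-- Normalising labels to class minima (`f t ≤ t`) leaves 120 labelings for the exhaustive check.
theorem exists_arc_partition_of_labels (f : Fin 5 → Fin 5) (hmin : ∀ t, f t ≤ t)
    (hcard : ∀ t, #{s | s = t ∨ f t = f s} ≤ 3)
    (hstable : ∀ t, ¬ IsBlockingArc (fun s s' => f s = f s') t) :
    ∃ t, ∀ s s', s ≠ s' → (f s = f s' ↔ (s ∈ arc t ↔ s' ∈ arc t)) := by
  revert f
  unfold IsBlockingArc likedMates arc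
  decide +kernel

def classMin (t : Fin 5) : Fin 5 := (univ.filter fun s => s = t ∨ R t s).min' ⟨t, by simp⟩

variable {R}

theorem classMin_eq_classMin_iff (hsymm : ∀ s s', R s s' → R s' s)
    (htrans : ∀ s s' s'', R s s' → R s' s'' → R s s'') {s s' : Fin 5}
    (hne : s ≠ s') : classMin R s = classMin R s' ↔ R s s' := by
  constructor
  · intro h
    have hm : classMin R s ∈ univ.filter fun x => x = s ∨ R s x := min'_mem _ _
    have hm' : classMin R s' ∈ univ.filter fun x => x = s' ∨ R s' x := min'_mem _ _
    rw [← h] at hm'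
    simp only [mem_filter, mem_univ, true_and] at hm hm'
    rcases hm with hm | hm <;> rcases hm' with hm' | hm'
    · exact absurd (hm.symm.trans hm') hne
    · exact hsymm _ _ (hm ▸ hm')
    · exact hm' ▸ hm
    · exact htrans _ _ _ hm (hsymm _ _ hm')
  · intro h
    have hclass :
        (univ.filter fun x => x = s ∨ R s x) = univ.filter fun x => x = s' ∨ R s' x := by
      ext x
      simp only [mem_filter, mem_univ, true_and]
      constructor
      · rintro (rfl | hx)
        · exact Or.inr (hsymm _ _ h)
        · exact Or.inr (htrans _ _ _ (hsymm _ _ h) hx)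
      · rintro (rfl | hx)
        · exact Or.inr h
        · exact Or.inr (htrans _ _ _ h hx)
    unfold classMin
    congr 1

theorem likes_ne {t s : Fin 5} (h : Likes t s) : s ≠ t := by
  rintro rfl
  simp [Likes] at h

theorem exists_arc_partition (hsymm : ∀ s s', R s s' → R s' s)
    (htrans : ∀ s s' s'', R s s' → R s' s'' → R s s'')
    (hcard : ∀ t, #{s | s = t ∨ R t s} ≤ 3) (hstable : ∀ t, ¬ IsBlockingArc R t) :
    ∃ t, ∀ s s', s ≠ s' → (R s s' ↔ (s ∈ arc t ↔ s' ∈ arc t)) := by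
  have hf := fun s s' (hne : s ≠ s') => classMin_eq_classMin_iff hsymm htrans hne
  have hmates :
      ∀ t, likedMates (fun s s' => classMin R s = classMin R s') t = likedMates R t := by
    intro t
    unfold likedMates
    congr 1
    refine filter_congr fun s _ => and_congr_left fun hl => hf t s (likes_ne hl).symm
  obtain ⟨t, ht⟩ := exists_arc_partition_of_labels (classMin R)
    (fun t => min'_le _ _ (by simp))
    (fun t => (card_le_card fun s => by
      simp only [mem_filter, mem_univ, true_and]
      rintro (rfl | h)
      · exact Or.inl rfl
      · by_cases hs : s = t
        · exact Or.inl hs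
        · exact Or.inr ((hf t s (Ne.symm hs)).mp h)).trans (hcard t))
    (fun t => by simpa only [IsBlockingArc, hmates] using hstable t)
  exact ⟨t, fun s s' hne => (hf s s' hne).symm.trans (ht s s' hne)⟩

end Pentagon

section Matching

variable {N : Finset A} {M : Finset (Finset A)} {T T' : Finset A} {x y z : A}

def Together (M : Finset (Finset A)) (x y : A) : Prop := ∃ T ∈ M, x ∈ T ∧ y ∈ T

theorem Together.symm (h : Together M x y) : Together M y x :=
  let ⟨T, hT, hx, hy⟩ := h; ⟨T, hT, hy, hx⟩

variable [DecidableEq A]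

instance : DecidableRel (Together M) := fun _ _ => by unfold Together; infer_instance

theorem IsMatching.eq_of_mem (hM : IsMatching N M) (hT : T ∈ M) (hT' : T' ∈ M) (hx : x ∈ T)
    (hx' : x ∈ T') : T = T' := by
  by_contra hne
  exact disjoint_left.mp (hM.2 T hT T' hT' hne) hx hx'

theorem IsMatching.mem_of_together (hM : IsMatching N M) (hT : T ∈ M) (hx : x ∈ T)
    (hxy : Together M x y) : y ∈ T := by
  obtain ⟨T', hT', hx', hy⟩ := hxy
  rwa [hM.eq_of_mem hT hT' hx hx']

theorem IsMatching.together_trans (hM : IsMatching N M) (hxy : Together M x y)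
    (hyz : Together M y z) : Together M x z := by
  obtain ⟨T, hT, hx, hy⟩ := hxy
  exact ⟨T, hT, hx, hM.mem_of_together hT hy hyz⟩

theorem IsMatching.utility_eq (hM : IsMatching N M) (hT : T ∈ M) (hx : x ∈ T)
    (val : A → A → ℤ) : utility val M x = ∑ y ∈ T.erase x, val x y := by
  have : M.filter (fun T' => x ∈ T') = {T} := by
    ext T'
    simp only [mem_filter, mem_singleton]
    exact ⟨fun ⟨hT', hx'⟩ => hM.eq_of_mem hT' hT hx' hx, by rintro rfl; exact ⟨hT, hx⟩⟩
  rw [utility, this, sum_singleton]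

theorem IsMatching.utility_eq_add (hM : IsMatching N M) (hT : {y, z, x} ∈ M) (hxy : x ≠ y)
    (hxz : x ≠ z) (val : A → A → ℤ) : utility val M x = val x y + val x z := by
  have hyz : y ≠ z := by
    rintro rfl
    have h3 := (hM.1 _ hT).1
    rw [insert_idem] at h3
    exact absurd (card_le_two.trans_eq' h3) (by norm_num)
  rw [hM.utility_eq hT (by simp), erase_insert_of_ne hxy.symm, erase_insert_of_ne hxz.symm,
    erase_singleton, insert_empty, sum_pair hyz]

theorem utility_eq_zero_of_forall_notMem (h : ∀ T ∈ M, x ∉ T) (val : A → A → ℤ) :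
    utility val M x = 0 := by
  rw [utility, filter_false_of_mem h, sum_empty]

theorem IsMatching.utility_eq_card [Fintype A] (hM : IsMatching N M) {val : A → A → ℤ}
    (hval : ∀ y, val x y = 0 ∨ val x y = 1) :
    utility val M x = #{y | y ≠ x ∧ Together M x y ∧ val x y = 1} := by
  by_cases hx : ∃ T ∈ M, x ∈ T
  · obtain ⟨T, hT, hxT⟩ := hx
    have hfilter : ({y | y ≠ x ∧ Together M x y ∧ val x y = 1} : Finset A) =
        (T.erase x).filter (val x · = 1) := by
      ext y
      simp only [mem_filter, mem_univ, true_and, mem_erase]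
      exact ⟨fun ⟨hne, htog, h1⟩ => ⟨⟨hne, hM.mem_of_together hT hxT htog⟩, h1⟩,
        fun ⟨⟨hne, hy⟩, h1⟩ => ⟨hne, ⟨T, hT, hxT, hy⟩, h1⟩⟩
    rw [hM.utility_eq hT hxT, hfilter, ← sum_boole]
    refine sum_congr rfl fun y _ => ?_
    rcases hval y with h | h <;> simp [h]
  · push Not at hx
    rw [utility_eq_zero_of_forall_notMem hx, eq_comm, Nat.cast_eq_zero, card_eq_zero,
      filter_eq_empty_iff]
    rintro y - ⟨-, ⟨T, hT, hxT, -⟩, -⟩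
    exact hx T hT hxT

theorem IsMatching.card_together_le [Fintype A] (hM : IsMatching N M) (x : A) :
    #{y | y = x ∨ Together M x y} ≤ 3 := by
  by_cases hx : ∃ T ∈ M, x ∈ T
  · obtain ⟨T, hT, hxT⟩ := hx
    refine (card_le_card fun y hy => ?_).trans (hM.1 T hT).1.le
    rcases (mem_filter.mp hy).2 with rfl | htog
    · exact hxT
    · exact hM.mem_of_together hT hxT htog
  · push Not at hx
    refine (card_le_card (t := {x}) fun y hy => ?_).trans (by simp)
    rcases (mem_filter.mp hy).2 with rfl | ⟨T, hT, hxT, -⟩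
    · exact mem_singleton_self y
    · exact absurd hxT (hx T hT)

theorem Finset.exists_eq_triple_of_card_eq_three (h : #T = 3) (hx : x ∈ T) (hy : y ∈ T)
    (hxy : x ≠ y) : ∃ z, z ≠ x ∧ z ≠ y ∧ T = {x, y, z} := by
  have hy' : y ∈ T.erase x := mem_erase.mpr ⟨hxy.symm, hy⟩
  obtain ⟨z, hz⟩ := card_eq_one.mp (by rw [card_erase_of_mem hy', card_erase_of_mem hx, h] :
    #((T.erase x).erase y) = 1)
  have hzT : z ∈ (T.erase x).erase y := hz ▸ mem_singleton_self z
  refine ⟨z, (mem_erase.mp (mem_erase.mp hzT).2).1, (mem_erase.mp hzT).1, ?_⟩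
  rw [← insert_erase hx, ← insert_erase hy', hz]

end Matching

section Reduction

open Pentagon

variable {q : ℕ} {G : SimpleGraph (Fin (3*q))} [DecidableRel G.Adj]
  {M : Finset (Finset (Agent q))}

theorem redVal_p_p (r r' : Fin (6*q)) (t t' : Fin 5) :
    redVal q G (.p r t) (.p r' t') = if r = r' ∧ Likes t t' then 1 else 0 := rfl

theorem redVal_eq_zero_or_one (x y : Agent q) : redVal q G x y = 0 ∨ redVal q G x y = 1 := by
  cases x <;> cases y <;> simp only [redVal] <;> (try split_ifs) <;> simp

def GadgetTogether (M : Finset (Finset (Agent q))) (r : Fin (6*q)) (s s' : Fin 5) : Prop :=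
  Together M (.p r s) (.p r s')

instance (r : Fin (6*q)) : DecidableRel (GadgetTogether M r) :=
  fun _ _ => by unfold GadgetTogether; infer_instance

theorem utility_p_eq_likedMates (hM : IsMatching univ M) (r : Fin (6*q)) (t : Fin 5) :
    utility (redVal q G) M (.p r t) = likedMates (GadgetTogether M r) t := by
  rw [hM.utility_eq_card (redVal_eq_zero_or_one _), likedMates,
    ← card_image_of_injective (f := Agent.p r) _ (fun _ _ h => (Agent.p.inj h).2)]
  congr 2
  ext y
  simp only [mem_filter, mem_univ, true_and, mem_image]
  cases y with
  | p r' s =>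
    simp only [ne_eq, Agent.p.injEq, not_and, redVal_p_p, ite_eq_left_iff, zero_ne_one, imp_false,
      Classical.not_imp, Decidable.not_not, GadgetTogether, exists_eq_right_right]
    constructor
    · rintro ⟨-, htog, rfl, hl⟩
      exact ⟨⟨htog, hl⟩, rfl⟩
    · rintro ⟨⟨htog, hl⟩, rfl⟩
      exact ⟨fun _ => likes_ne hl, htog, rfl, hl⟩
  | _ => simp [redVal]

theorem gadget_arc_partition (hM : IsMatching univ M) (hstable : IsStable univ (redVal q G) M)
    (r : Fin (6*q)) :
    ∃ t, ∀ s s', s ≠ s' → (GadgetTogether M r s s' ↔ (s ∈ arc t ↔ s' ∈ arc t)) := by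
  refine exists_arc_partition (fun _ _ h => Together.symm h)
    (fun _ _ _ h h' => hM.together_trans h h') (fun t => ?_) (fun t hblock => ?_)
  · refine (card_le_card_of_injOn (Agent.p r) (fun s hs => ?_) ?_).trans
      (hM.card_together_le (.p r t))
    · simp only [mem_coe, mem_filter, mem_univ, true_and] at hs ⊢
      exact hs.imp (congrArg _) id
    · exact fun _ _ _ _ h => (Agent.p.inj h).2
  · obtain ⟨h0, h1, h2⟩ := hblock
    have hlikes : ∀ t : Fin 5, Likes t (t + 1) ∧ Likes t (t + 2) ∧ Likes (t + 1) t ∧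
        Likes (t + 1) (t + 2) ∧ ¬ Likes (t + 2) t ∧ Likes (t + 2) (t + 1) := by
      unfold Likes; decide
    have hne : ∀ t : Fin 5, t ≠ t + 1 ∧ t ≠ t + 2 ∧ t + 1 ≠ t + 2 := by decide
    obtain ⟨l01, l02, l10, l12, l20, l21⟩ := hlikes t
    obtain ⟨n01, n02, n12⟩ := hne t
    refine hstable (.p r t) (.p r (t + 1)) (.p r (t + 2)) ⟨mem_univ _, mem_univ _, mem_univ _,
      by simp [n01], by simp [n02], by simp [n12], ?_, ?_, ?_⟩ <;>
      simp only [utility_p_eq_likedMates hM, redVal_p_p, true_and, l01, l02, l10, l12, l20, l21,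
        if_true, if_false] <;> omega

theorem exists_gadgetTogether_ne (hM : IsMatching univ M)
    (hstable : IsStable univ (redVal q G) M) (r : Fin (6*q)) (s : Fin 5) :
    ∃ s', s' ≠ s ∧ GadgetTogether M r s s' := by
  obtain ⟨t, ht⟩ := gadget_arc_partition hM hstable r
  have hmate : ∀ t s : Fin 5, ∃ s', s' ≠ s ∧ (s ∈ arc t ↔ s' ∈ arc t) := by
    unfold arc; decide
  obtain ⟨s', hne, hs'⟩ := hmate t s
  exact ⟨s', hne, (ht s s' hne.symm).mpr hs'⟩

theorem exists_gadget_pair (hM : IsMatching univ M) (hstable : IsStable univ (redVal q G) M)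
    (r : Fin (6*q)) : ∃ t : Fin 5, GadgetTogether M r (t + 3) (t + 4) ∧
      ∀ s, s ≠ t + 3 → GadgetTogether M r (t + 3) s → s = t + 4 := by
  obtain ⟨t, ht⟩ := gadget_arc_partition hM hstable r
  have hout : ∀ t : Fin 5, t + 3 ≠ t + 4 ∧ t + 3 ∉ arc t ∧ t + 4 ∉ arc t ∧
      ∀ s, s ≠ t + 3 → s ∉ arc t → s = t + 4 := by unfold arc; decide
  obtain ⟨hne, h3, h4, hrest⟩ := hout t
  refine ⟨t, (ht _ _ hne).mpr (iff_of_false h3 h4), fun s hs htog => hrest s hs ?_⟩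
  exact fun hsarc => h3 (((ht _ _ hs.symm).mp htog).mpr hsarc)

theorem utility_a_le_one (hM : IsMatching univ M) {j : Fin (3*q)} {σ : Fin 2}
    (hb : ¬ Together M (.a j σ) (.b j)) : utility (redVal q G) M (.a j σ) ≤ 1 := by
  have hliked : ∀ y, Together M (.a j σ) y → redVal q G (.a j σ) y = 1 →
      ∃ σ', σ' ≠ σ ∧ y = .a j σ' := by
    rintro (⟨j', σ'⟩ | j' | ⟨r, t⟩) htog h1
    · have hc : j = j' ∧ σ ≠ σ' := by
        by_contra hc
        simp [redVal, hc] at h1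
      exact ⟨σ', Ne.symm hc.2, by rw [hc.1]⟩
    · have hc : j = j' := by
        by_contra hc
        simp [redVal, hc] at h1
      subst hc
      exact absurd htog hb
    · simp [redVal] at h1
  rw [hM.utility_eq_card (redVal_eq_zero_or_one _)]
  norm_cast
  refine card_le_one.mpr fun y hy y' hy' => ?_
  simp only [mem_filter, mem_univ, true_and] at hy hy'
  obtain ⟨σ₁, h₁, rfl⟩ := hliked y hy.2.1 hy.2.2
  obtain ⟨σ₂, h₂, rfl⟩ := hliked y' hy'.2.1 hy'.2.2
  have hfin2 : ∀ σ σ₁ σ₂ : Fin 2, σ₁ ≠ σ → σ₂ ≠ σ → σ₁ = σ₂ := by decide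
  rw [hfin2 σ σ₁ σ₂ h₁ h₂]

theorem utility_b_pos (hM : IsMatching univ M) (hstable : IsStable univ (redVal q G) M)
    (j : Fin (3*q)) : 0 < utility (redVal q G) M (.b j) := by
  by_contra h
  have hb : ∀ σ, ¬ Together M (.a j σ) (.b j) := by
    intro σ htog
    rw [hM.utility_eq_card (redVal_eq_zero_or_one _)] at h
    refine h (Nat.cast_pos.mpr (card_pos.mpr ⟨.a j σ, ?_⟩))
    simp only [mem_filter, mem_univ, true_and]
    exact ⟨by simp, htog.symm, by simp [redVal]⟩
  have h0 := utility_a_le_one (G := G) hM (hb 0)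
  have h1 := utility_a_le_one (G := G) hM (hb 1)
  refine hstable (.a j 0) (.a j 1) (.b j) ⟨mem_univ _, mem_univ _, mem_univ _,
    by simp, by simp, by simp, ?_, ?_, ?_⟩ <;> simp [redVal] <;> omega

theorem exists_gadget_pair_triple (hM : IsMatching univ M)
    (hstable : IsStable univ (redVal q G) M) (r : Fin (6*q)) :
    ∃ (t : Fin 5) (j : Fin (3*q)) (σ : Fin 2), {.p r (t + 3), .p r (t + 4), .a j σ} ∈ M := by
  obtain ⟨t, ⟨T, hT, h3, h4⟩, honly⟩ := exists_gadget_pair hM hstable r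
  obtain ⟨z, hz3, hz4, rfl⟩ :=
    exists_eq_triple_of_card_eq_three (hM.1 T hT).1 h3 h4 (by simp)
  cases z with
  | a j σ => exact ⟨t, j, σ, hT⟩
  | b j =>
    exact absurd (hM.utility_eq_add hT (by simp) (by simp) _) (utility_b_pos hM hstable j).ne'
  | p r' s =>
    obtain ⟨s', hs', htog⟩ := exists_gadgetTogether_ne hM hstable r' s
    have hmem := hM.mem_of_together hT (by simp) htog
    simp only [mem_insert, Agent.p.injEq, mem_singleton, true_and] at hmem
    obtain rfl : r' = r := by
      rcases hmem with ⟨h, -⟩ | ⟨h, -⟩ | h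
      exacts [h, h, absurd h hs']
    exact absurd (congrArg _ (honly s (fun h => hz3 (h ▸ rfl)) ⟨_, hT, h3, by simp⟩)) hz4

theorem exists_gadget_pair_triple_of_a (hM : IsMatching univ M)
    (hstable : IsStable univ (redVal q G) M)
    (i : Fin (3*q)) (s : Fin 2) :
    ∃ (r : Fin (6*q)) (t : Fin 5), {.p r (t + 3), .p r (t + 4), .a i s} ∈ M := by
  choose t j σ hT using exists_gadget_pair_triple hM hstable
  have hinj : Function.Injective fun r => (j r, σ r) := by
    intro r r' h
    simp only [Prod.mk.injEq] at h
    have hTT := hM.eq_of_mem (hT r) (hT r') (x := .a (j r) (σ r)) (by simp) (by simp [h])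
    have hp : Agent.p r (t r + 3) ∈
        ({.p r' (t r' + 3), .p r' (t r' + 4), .a (j r') (σ r')} : Finset (Agent q)) :=
      hTT ▸ by simp
    simp only [mem_insert, Agent.p.injEq, add_left_inj, mem_singleton, reduceCtorEq, or_false] at hp
    rcases hp with ⟨h, -⟩ | ⟨h, -⟩ <;> exact h
  have hsurj := ((Fintype.bijective_iff_injective_and_card _).mpr ⟨hinj, by
    simp only [Fintype.card_fin, Fintype.card_prod]; ring⟩).2
  obtain ⟨r, hr⟩ := hsurj (i, s)
  simp only [Prod.mk.injEq] at hr
  obtain ⟨rfl, rfl⟩ := hr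
  exact ⟨r, t r, hT r⟩

end Reduction

theorem a_agents_utility_zero_general
    (q : ℕ) (G : SimpleGraph (Fin (3*q))) [DecidableRel G.Adj]
    (M : Finset (Finset (Agent q)))
    (hM : IsMatching (Finset.univ : Finset (Agent q)) M)
    (hstable : IsStable Finset.univ (redVal q G) M)
    (i : Fin (3*q)) (s : Fin 2) :
    utility (redVal q G) M (Agent.a i s) = 0 := by
  obtain ⟨r, t, hT⟩ := exists_gadget_pair_triple_of_a hM hstable i s
  rw [hM.utility_eq_add hT (by simp) (by simp)]
  rfl

/-- In any stable matching of the reduced instance in which every agent is matched, every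
agent `a_i^s` has utility `0`. -/
theorem a_agents_utility_zero
    (q : ℕ) (G : SimpleGraph (Fin (3*q))) [DecidableRel G.Adj]
    (M : Finset (Finset (Agent q)))
    (hM : IsMatching (Finset.univ : Finset (Agent q)) M)
    (hstable : IsStable Finset.univ (redVal q G) M)
    (hcard : M.card = 13 * q) (i : Fin (3*q)) (s : Fin 2) :
    utility (redVal q G) M (Agent.a i s) = 0 :=
  a_agents_utility_zero_general q G M hM hstable i s
end

section
/- Let G=(W,E) be a simple undirected graph with W={w_1,…,w_{3q}}, let (N,V) be the instance of 3D-SR-AS-BIN constructed from G by the reduction, and let M be a stable matching in (N,V) with |M| = |N|/3. Then for every 1 ≤ i ≤ 3q, the triple M(b_i) equals {b_i, b_j, b_k} for some 1 ≤ j,k ≤ 3q with {w_i,w_j} ∈ E and {w_i,w_k} ∈ E. -/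
/-!
The `13q` disjoint triples cover all `39q` agents, so every agent is matched. Inside a
pentagadget `p x` likes `p (x + 1)`, `p (x + 2)` and `p (x + 4)`. If `p x` had utility `0`, then
by `{p x, p (x + 3), p (x + 4)}` one of `p (x + 3)`, `p (x + 4)` would have utility `2`, which
fixes its triple and makes `{p (x + 4), p x, p (x + 1)}` resp. `{p x, p (x + 1), p (x + 2)}`
blocking. So every pentagadget agent shares its triple with another agent of its gadget, and
since `3 ∤ 5` some triple holds exactly two agents of the gadget. Its third member must be an
agent `a_j^s`: an agent `b_j` there would have utility `0`, and `{a_j^1, a_j^2, b_j}` would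
block. Distinct gadgets absorb distinct agents `a_j^s`, and there are `6q` of both, so no `a_i^s`
is matched with `b_i`. Then `{a_i^1, a_i^2, b_i}` does not block only if `b_i` has utility `2`,
that is, both partners of `b_i` are agents `b_j` with `{w_i, w_j} ∈ E`.
-/

open Finset

variable {A : Type*}

open Finset

section Matching

variable [DecidableEq A] {N : Finset A} {M : Finset (Finset A)} {val : A → A → ℤ}
  {t s : Finset A} {a b c : A}

namespace IsMatching

theorem eq_of_mem_of_mem (hM : IsMatching N M) (ht : t ∈ M) (hs : s ∈ M) (hat : a ∈ t)
    (has : a ∈ s) : t = s := by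
  by_contra hne
  exact Finset.disjoint_left.mp (hM.2 t ht s hs hne) hat has

theorem card_biUnion (hM : IsMatching N M) {S : Finset (Finset A)} (hS : S ⊆ M) :
    #(S.biUnion id) = 3 * #S := by
  rw [Finset.card_biUnion (t := id) fun t ht s hs hne => hM.2 t (hS ht) s (hS hs) hne]
  simp only [id]
  rw [Finset.sum_congr rfl fun t ht => (hM.1 t (hS ht)).1, Finset.sum_const, smul_eq_mul,
    mul_comm]

theorem exists_mem_of_card_eq (hM : IsMatching N M) (hcard : 3 * #M = #N) :
    ∀ a ∈ N, ∃ t ∈ M, a ∈ t := by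
  have hunion : M.biUnion id = N :=
    Finset.eq_of_subset_of_card_le (Finset.biUnion_subset.mpr fun t ht => (hM.1 t ht).2)
      (by rw [hM.card_biUnion subset_rfl, hcard])
  intro a ha
  have : a ∈ M.biUnion id := hunion ▸ ha
  simpa using this

theorem three_dvd_card (hM : IsMatching N M) {X : Finset A}
    (hcov : ∀ a ∈ X, ∃ t ∈ M, a ∈ t) (hclosed : ∀ t ∈ M, ∀ a ∈ t, a ∈ X → t ⊆ X) :
    3 ∣ #X := by
  have hX : (M.filter (· ⊆ X)).biUnion id = X := by
    ext a
    simp only [Finset.mem_biUnion, Finset.mem_filter, id]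
    refine ⟨fun ⟨t, ⟨_, htX⟩, hat⟩ => htX hat, fun ha => ?_⟩
    obtain ⟨t, ht, hat⟩ := hcov a ha
    exact ⟨t, ⟨ht, hclosed t ht a hat ha⟩, hat⟩
  rw [← hX, hM.card_biUnion (Finset.filter_subset _ M)]
  exact dvd_mul_right 3 _

theorem eq_triple (hM : IsMatching N M) (ht : t ∈ M) (ha : a ∈ t) (hb : b ∈ t) (hc : c ∈ t)
    (hab : a ≠ b) (hac : a ≠ c) (hbc : b ≠ c) : t = {a, b, c} := by
  refine (Finset.eq_of_subset_of_card_le ?_ ?_).symm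
  · intro x hx
    simp only [Finset.mem_insert, Finset.mem_singleton] at hx
    rcases hx with rfl | rfl | rfl <;> assumption
  · rw [(hM.1 t ht).1, Finset.card_insert_of_notMem (by simp [hab, hac]),
      Finset.card_pair hbc]

theorem exists_eq_triple (hM : IsMatching N M) (ht : t ∈ M) (ha : a ∈ t) :
    ∃ b c, a ≠ b ∧ a ≠ c ∧ b ≠ c ∧ t = {a, b, c} := by
  have h2 : #(t.erase a) = 2 := by rw [Finset.card_erase_of_mem ha, (hM.1 t ht).1]
  obtain ⟨b, c, hbc, hbc'⟩ := Finset.card_eq_two.mp h2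
  have hb : b ∈ t.erase a := by simp [hbc']
  have hc : c ∈ t.erase a := by simp [hbc']
  exact ⟨b, c, (Finset.ne_of_mem_erase hb).symm, (Finset.ne_of_mem_erase hc).symm, hbc,
    by rw [← Finset.insert_erase ha, hbc']⟩

theorem eq_triple_of_forall (hM : IsMatching N M) (ht : t ∈ M)
    (h : ∀ x ∈ t, x ≠ a → x = b ∨ x = c) : t = {a, b, c} := by
  refine Finset.eq_of_subset_of_card_le (fun x hx => ?_) ?_
  · by_cases hxa : x = a
    · simp [hxa]
    · rcases h x hx hxa with rfl | rfl <;> simp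
  · rw [(hM.1 t ht).1]
    exact Finset.card_le_three

theorem utility_eq_sum (hM : IsMatching N M) (ht : t ∈ M) (ha : a ∈ t) :
    utility val M a = ∑ b ∈ t.erase a, val a b := by
  have : M.filter (a ∈ ·) = {t} := by
    ext s
    simp only [Finset.mem_filter, Finset.mem_singleton]
    exact ⟨fun ⟨hs, has⟩ => hM.eq_of_mem_of_mem hs ht has ha, by rintro rfl; exact ⟨ht, ha⟩⟩
  rw [utility, this, Finset.sum_singleton]

theorem utility_eq_add_s7 (hM : IsMatching N M) (ht : t ∈ M) (ha : a ∈ t) (hb : b ∈ t)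
    (hc : c ∈ t) (hab : a ≠ b) (hac : a ≠ c) (hbc : b ≠ c) :
    utility val M a = val a b + val a c := by
  rw [hM.utility_eq_sum ht ha, hM.eq_triple ht ha hb hc hab hac hbc,
    Finset.erase_insert (by simp [hab, hac]), Finset.sum_pair hbc]

theorem exists_mem_ne_ne (hM : IsMatching N M) (ht : t ∈ M) (a b : A) :
    ∃ c ∈ t, c ≠ a ∧ c ≠ b := by
  have : 0 < #((t.erase a).erase b) := by
    have h₁ := Finset.pred_card_le_card_erase (s := t) (a := a)
    have h₂ := Finset.pred_card_le_card_erase (s := t.erase a) (a := b)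
    rw [(hM.1 t ht).1] at h₁
    omega
  obtain ⟨c, hc⟩ := Finset.card_pos.mp this
  exact ⟨c, Finset.mem_of_mem_erase (Finset.mem_of_mem_erase hc),
    Finset.ne_of_mem_erase (Finset.mem_of_mem_erase hc), Finset.ne_of_mem_erase hc⟩

theorem notMem_of_utility_nonpos (hM : IsMatching N M) (hval : ∀ x, 0 ≤ val a x)
    (ht : t ∈ M) (ha : a ∈ t) (hab : a ≠ b) (h : val a b = 1) (hu : utility val M a ≤ 0) :
    b ∉ t := by
  intro hb
  have : val a b ≤ utility val M a := by
    rw [hM.utility_eq_sum ht ha]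
    exact Finset.single_le_sum (fun x _ => hval x) (Finset.mem_erase.mpr ⟨hab.symm, hb⟩)
  omega

theorem val_eq_one_of_two_le_utility (hM : IsMatching N M) (hval : ∀ x, val a x ≤ 1)
    (ht : t ∈ M) (ha : a ∈ t) (hb : b ∈ t) (hab : a ≠ b) (h : 2 ≤ utility val M a) :
    val a b = 1 := by
  obtain ⟨c, hc, hca, hcb⟩ := hM.exists_mem_ne_ne ht a b
  rw [hM.utility_eq_add_s7 ht ha hb hc hab hca.symm hcb.symm] at h
  linarith [hval b, hval c]

theorem exists_val_eq_one_of_pos (hM : IsMatching N M)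
    (hval : ∀ x, val a x = 0 ∨ val a x = 1) (ht : t ∈ M) (ha : a ∈ t)
    (h : 0 < utility val M a) : ∃ b ∈ t, b ≠ a ∧ val a b = 1 := by
  rw [hM.utility_eq_sum ht ha] at h
  obtain ⟨b, hb, hne⟩ := Finset.exists_ne_zero_of_sum_ne_zero h.ne'
  exact ⟨b, Finset.mem_of_mem_erase hb, Finset.ne_of_mem_erase hb, (hval b).resolve_left hne⟩

end IsMatching

theorem IsStable.exists_le_utility (hst : IsStable N val M) {x y z : A} (hx : x ∈ N)
    (hy : y ∈ N) (hz : z ∈ N) (hxy : x ≠ y) (hxz : x ≠ z) (hyz : y ≠ z) :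
    val x y + val x z ≤ utility val M x ∨ val y x + val y z ≤ utility val M y ∨
      val z x + val z y ≤ utility val M z := by
  by_contra! h
  exact hst x y z ⟨hx, hy, hz, hxy, hxz, hyz, h.1, h.2.1, h.2.2⟩

end Matching

structure IsPentagadget (val : A → A → ℤ) (P : Fin 5 → A) : Prop where
  injective : Function.Injective P
  val_eq_zero_or_one : ∀ x b, val (P x) b = 0 ∨ val (P x) b = 1
  val_eq_one_iff : ∀ x b, val (P x) b = 1 ↔ b = P (x + 1) ∨ b = P (x + 2) ∨ b = P (x + 4)

namespace IsPentagadget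

variable {val : A → A → ℤ} {P : Fin 5 → A}

theorem val_nonneg (hP : IsPentagadget val P) (x : Fin 5) (b : A) : 0 ≤ val (P x) b := by
  rcases hP.val_eq_zero_or_one x b with h | h <;> simp [h]

theorem val_le_one (hP : IsPentagadget val P) (x : Fin 5) (b : A) : val (P x) b ≤ 1 := by
  rcases hP.val_eq_zero_or_one x b with h | h <;> simp [h]

theorem comp_add (hP : IsPentagadget val P) (z : Fin 5) :
    IsPentagadget val (fun x => P (z + x)) where
  injective := hP.injective.comp (add_right_injective z)
  val_eq_zero_or_one x := hP.val_eq_zero_or_one (z + x)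
  val_eq_one_iff x b := by simp only [hP.val_eq_one_iff, add_assoc]

variable [DecidableEq A] {N : Finset A} {M : Finset (Finset A)}

theorem val_eq (hP : IsPentagadget val P) (x : Fin 5) (b : A) :
    val (P x) b = if b = P (x + 1) ∨ b = P (x + 2) ∨ b = P (x + 4) then 1 else 0 := by
  split_ifs with h
  · exact (hP.val_eq_one_iff x b).2 h
  · exact (hP.val_eq_zero_or_one x b).resolve_right (mt (hP.val_eq_one_iff x b).1 h)

theorem exists_le_utility (hP : IsPentagadget val P) (hst : IsStable N val M)
    (hPN : ∀ x, P x ∈ N) {x y z : Fin 5} (hxy : x ≠ y) (hxz : x ≠ z) (hyz : y ≠ z) :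
    val (P x) (P y) + val (P x) (P z) ≤ utility val M (P x) ∨
      val (P y) (P x) + val (P y) (P z) ≤ utility val M (P y) ∨
      val (P z) (P x) + val (P z) (P y) ≤ utility val M (P z) :=
  hst.exists_le_utility (hPN x) (hPN y) (hPN z) (hP.injective.ne hxy) (hP.injective.ne hxz)
    (hP.injective.ne hyz)

theorem notMem_of_utility_nonpos (hP : IsPentagadget val P) (hM : IsMatching N M)
    {t : Finset A} {x y : Fin 5} (ht : t ∈ M) (hx : P x ∈ t) (hu : utility val M (P x) ≤ 0)
    (h : val (P x) (P y) = 1) : P y ∉ t :=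
  hM.notMem_of_utility_nonpos (hP.val_nonneg x) ht hx
    (fun hxy => by simp [← hxy, hP.val_eq, hP.injective.eq_iff] at h) h hu

theorem utility_three_le_one (hP : IsPentagadget val P) (hM : IsMatching N M)
    (hst : IsStable N val M) (hPN : ∀ x, P x ∈ N) (hcov : ∀ x, ∃ t ∈ M, P x ∈ t)
    (hu₀ : utility val M (P 0) ≤ 0) : utility val M (P 3) ≤ 1 := by
  choose T hT hPT using hcov
  have h₀ : ∀ y, val (P 0) (P y) = 1 → P y ∉ T 0 := fun y =>
    hP.notMem_of_utility_nonpos hM (hT 0) (hPT 0) hu₀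
  by_contra! hu₃
  have hliked : ∀ b ∈ T 3, b ≠ P 3 → b = P 4 ∨ b = P 0 ∨ b = P 2 := fun b hb hne => by
    simpa using (hP.val_eq_one_iff 3 b).1
      (hM.val_eq_one_of_two_le_utility (hP.val_le_one 3) (hT 3) (hPT 3) hb hne.symm hu₃)
  -- the third member of a triple `{P 0, P 3, _}` would be `P 4` or `P 2`, both liked by `P 0`
  have h₀₃ : P 0 ∉ T 3 := by
    intro h
    have hT₃₀ : T 3 = T 0 := hM.eq_of_mem_of_mem (hT 3) (hT 0) h (hPT 0)
    obtain ⟨c, hc, hc₃, hc₀⟩ := hM.exists_mem_ne_ne (hT 3) (P 3) (P 0)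
    rcases hliked c hc hc₃ with rfl | rfl | rfl
    · exact h₀ 4 (by simp [hP.val_eq, hP.injective.eq_iff]) (hT₃₀ ▸ hc)
    · exact hc₀ rfl
    · exact h₀ 2 (by simp [hP.val_eq, hP.injective.eq_iff]) (hT₃₀ ▸ hc)
  have hT₃ : T 3 = {P 3, P 4, P 2} := hM.eq_triple_of_forall (hT 3) fun b hb hne => by
    rcases hliked b hb hne with h | rfl | h
    exacts [Or.inl h, absurd hb h₀₃, Or.inr h]
  have hu₄ : utility val M (P 4) ≤ 1 := by
    rw [hM.utility_eq_add_s7 (a := P 4) (b := P 3) (c := P 2) (hT 3) (by simp [hT₃]) (hPT 3)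
      (by simp [hT₃]) (hP.injective.ne (by decide)) (hP.injective.ne (by decide))
      (hP.injective.ne (by decide))]
    simp [hP.val_eq, hP.injective.eq_iff]
  have hu₁ : utility val M (P 1) ≤ 0 := by
    by_contra! h
    obtain ⟨b, hb, -, hb₁⟩ :=
      hM.exists_val_eq_one_of_pos (hP.val_eq_zero_or_one 1) (hT 1) (hPT 1) h
    have hb' : b = P 2 ∨ b = P 3 ∨ b = P 0 := by simpa using (hP.val_eq_one_iff 1 b).1 hb₁
    rcases hb' with rfl | rfl | rfl
    · have := hM.eq_of_mem_of_mem (hT 1) (hT 3) hb (by simp [hT₃]) ▸ hPT 1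
      simp [hT₃, hP.injective.eq_iff] at this
    · have := hM.eq_of_mem_of_mem (hT 1) (hT 3) hb (hPT 3) ▸ hPT 1
      simp [hT₃, hP.injective.eq_iff] at this
    · exact h₀ 1 (by simp [hP.val_eq, hP.injective.eq_iff])
        (hM.eq_of_mem_of_mem (hT 1) (hT 0) hb (hPT 0) ▸ hPT 1)
  rcases hP.exists_le_utility hst hPN (x := 4) (y := 0) (z := 1) (by decide) (by decide)
    (by decide) with h | h | h <;> simp [hP.val_eq, hP.injective.eq_iff] at h <;> omega

theorem utility_four_le_one (hP : IsPentagadget val P) (hM : IsMatching N M)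
    (hst : IsStable N val M) (hPN : ∀ x, P x ∈ N) (hcov : ∀ x, ∃ t ∈ M, P x ∈ t)
    (hu₀ : utility val M (P 0) ≤ 0) : utility val M (P 4) ≤ 1 := by
  choose T hT hPT using hcov
  have h₀ : ∀ y, val (P 0) (P y) = 1 → P y ∉ T 0 := fun y =>
    hP.notMem_of_utility_nonpos hM (hT 0) (hPT 0) hu₀
  by_contra! hu₄
  have hT₄ : T 4 = {P 4, P 1, P 3} := hM.eq_triple_of_forall (hT 4) fun b hb hne => by
    have hb' : b = P 0 ∨ b = P 1 ∨ b = P 3 := by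
      simpa using (hP.val_eq_one_iff 4 b).1
        (hM.val_eq_one_of_two_le_utility (hP.val_le_one 4) (hT 4) (hPT 4) hb hne.symm hu₄)
    rcases hb' with rfl | h | h
    · exact absurd (hM.eq_of_mem_of_mem (hT 4) (hT 0) hb (hPT 0) ▸ hPT 4)
        (h₀ 4 (by simp [hP.val_eq, hP.injective.eq_iff]))
    exacts [Or.inl h, Or.inr h]
  have hu₁ : utility val M (P 1) ≤ 1 := by
    rw [hM.utility_eq_add_s7 (a := P 1) (b := P 4) (c := P 3) (hT 4) (by simp [hT₄]) (hPT 4)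
      (by simp [hT₄]) (hP.injective.ne (by decide)) (hP.injective.ne (by decide))
      (hP.injective.ne (by decide))]
    simp [hP.val_eq, hP.injective.eq_iff]
  have hu₂ : utility val M (P 2) ≤ 0 := by
    by_contra! h
    obtain ⟨b, hb, -, hb₁⟩ :=
      hM.exists_val_eq_one_of_pos (hP.val_eq_zero_or_one 2) (hT 2) (hPT 2) h
    have hb₄ : b ∈ T 4 := by
      have : b = P 3 ∨ b = P 4 ∨ b = P 1 := by simpa using (hP.val_eq_one_iff 2 b).1 hb₁
      simp only [hT₄, Finset.mem_insert, Finset.mem_singleton]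
      tauto
    have := hM.eq_of_mem_of_mem (hT 2) (hT 4) hb hb₄ ▸ hPT 2
    simp [hT₄, hP.injective.eq_iff] at this
  rcases hP.exists_le_utility hst hPN (x := 0) (y := 1) (z := 2) (by decide) (by decide)
    (by decide) with h | h | h <;> simp [hP.val_eq, hP.injective.eq_iff] at h <;> omega

theorem utility_pos (hP : IsPentagadget val P) (hM : IsMatching N M) (hst : IsStable N val M)
    (hPN : ∀ x, P x ∈ N) (hcov : ∀ x, ∃ t ∈ M, P x ∈ t) (x : Fin 5) :
    0 < utility val M (P x) := by
  wlog hx : x = 0 generalizing P x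
  · simpa using this (hP.comp_add x) (fun y => hPN (x + y)) (fun y => hcov (x + y)) 0 rfl
  subst hx
  by_contra! hu₀
  rcases hP.exists_le_utility hst hPN (x := 0) (y := 3) (z := 4) (by decide) (by decide)
    (by decide) with h | h | h <;> simp [hP.val_eq, hP.injective.eq_iff] at h
  · omega
  · linarith [hP.utility_three_le_one hM hst hPN hcov hu₀]
  · linarith [hP.utility_four_le_one hM hst hPN hcov hu₀]

theorem exists_ne_mem (hP : IsPentagadget val P) (hM : IsMatching N M)
    (hst : IsStable N val M) (hPN : ∀ x, P x ∈ N) (hcov : ∀ x, ∃ t ∈ M, P x ∈ t)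
    {t : Finset A} {x : Fin 5} (ht : t ∈ M) (hx : P x ∈ t) : ∃ y ≠ x, P y ∈ t := by
  obtain ⟨b, hb, -, hb₁⟩ := hM.exists_val_eq_one_of_pos (hP.val_eq_zero_or_one x) ht hx
    (hP.utility_pos hM hst hPN hcov x)
  rcases (hP.val_eq_one_iff x b).1 hb₁ with rfl | rfl | rfl
  exacts [⟨x + 1, by simp, hb⟩, ⟨x + 2, by simp, hb⟩, ⟨x + 4, by simp, hb⟩]

-- otherwise the five agents of the gadget would form a union of triples of `M`
theorem exists_triple_notMem_range (hP : IsPentagadget val P) (hM : IsMatching N M)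
    (hst : IsStable N val M) (hPN : ∀ x, P x ∈ N) (hcov : ∀ x, ∃ t ∈ M, P x ∈ t) :
    ∃ x y c, x ≠ y ∧ c ∉ Set.range P ∧ {P x, P y, c} ∈ M := by
  by_contra! h
  have hclosed : ∀ t ∈ M, ∀ a ∈ t, a ∈ Finset.univ.image P → t ⊆ Finset.univ.image P := by
    intro t ht a hat ha
    obtain ⟨x, -, rfl⟩ := Finset.mem_image.mp ha
    obtain ⟨y, hyx, hy⟩ := hP.exists_ne_mem hM hst hPN hcov ht hat
    intro c hc
    by_contra hcP
    have hc' : c ∉ Set.range P := by simpa using hcP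
    have hne : ∀ z, P z ≠ c := fun z h => hc' ⟨z, h⟩
    exact h x y c hyx.symm hc'
      (hM.eq_triple ht hat hy hc (hP.injective.ne hyx.symm) (hne x) (hne y) ▸ ht)
  have h3 := hM.three_dvd_card (X := Finset.univ.image P) (fun a ha => by
    obtain ⟨x, -, rfl⟩ := Finset.mem_image.mp ha; exact hcov x) hclosed
  rw [Finset.card_image_of_injective _ hP.injective, Finset.card_univ, Fintype.card_fin] at h3
  omega

end IsPentagadget

namespace Agent

def equivSum (q : ℕ) : Agent q ≃ (Fin (3 * q) × Fin 2) ⊕ Fin (3 * q) ⊕ (Fin (6 * q) × Fin 5) where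
  toFun
    | .a i s => .inl (i, s)
    | .b i => .inr (.inl i)
    | .p r t => .inr (.inr (r, t))
  invFun
    | .inl (i, s) => .a i s
    | .inr (.inl i) => .b i
    | .inr (.inr (r, t)) => .p r t
  left_inv := by rintro (⟨i, s⟩ | i | ⟨r, t⟩) <;> rfl
  right_inv := by rintro (⟨i, s⟩ | i | ⟨r, t⟩) <;> rfl

theorem card (q : ℕ) : Fintype.card (Agent q) = 39 * q := by
  simp only [Fintype.card_congr (equivSum q), Fintype.card_sum, Fintype.card_prod,
    Fintype.card_fin]
  ring

end Agent

section Reduction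

variable {q : ℕ} {G : SimpleGraph (Fin (3 * q))} [DecidableRel G.Adj]
  {M : Finset (Finset (Agent q))} {t : Finset (Agent q)}

theorem redVal_le_one (x y : Agent q) : redVal q G x y ≤ 1 := by
  unfold redVal
  split <;> (try split_ifs) <;> norm_num

theorem redVal_a_eq_one_iff {i : Fin (3 * q)} {s : Fin 2} {c : Agent q} :
    redVal q G (.a i s) c = 1 ↔ c = .a i (s + 1) ∨ c = .b i := by
  rcases c with ⟨j, s'⟩ | j | ⟨r, w⟩
  · fin_cases s <;> fin_cases s' <;> simp [redVal, eq_comm]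
  · simp [redVal, eq_comm]
  · simp [redVal]

theorem redVal_b_eq_one_iff {i : Fin (3 * q)} {c : Agent q} :
    redVal q G (.b i) c = 1 ↔ (∃ s, c = .a i s) ∨ ∃ j, G.Adj i j ∧ c = .b j := by
  rcases c with ⟨j, s'⟩ | j | ⟨r, w⟩ <;> simp [redVal, eq_comm]

theorem isPentagadget_redVal (r : Fin (6 * q)) : IsPentagadget (redVal q G) (Agent.p r) where
  injective x y h := by simpa using h
  val_eq_zero_or_one x b := by
    unfold redVal
    split <;> (try split_ifs) <;> simp
  val_eq_one_iff x b := by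
    rcases b with ⟨j, s'⟩ | j | ⟨r', w⟩
    · simp [redVal]
    · simp [redVal]
    · simp only [redVal, sub_eq_iff_eq_add', Agent.p.injEq]
      split_ifs <;> simp <;> tauto

theorem utility_a_le_one_s7 (hM : IsMatching univ M) {i : Fin (3 * q)} {s : Fin 2} (ht : t ∈ M)
    (ha : Agent.a i s ∈ t) (hb : Agent.b i ∉ t) : utility (redVal q G) M (Agent.a i s) ≤ 1 := by
  by_contra! hu
  have := hM.eq_triple_of_forall ht fun x hx hne => redVal_a_eq_one_iff.1
    (hM.val_eq_one_of_two_le_utility (redVal_le_one _) ht ha hx hne.symm hu)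
  exact hb (this ▸ by simp)

theorem two_le_utility_b (hM : IsMatching univ M) (hst : IsStable univ (redVal q G) M)
    {i : Fin (3 * q)} (h : ∀ s, ∃ t ∈ M, Agent.a i s ∈ t ∧ Agent.b i ∉ t) :
    2 ≤ utility (redVal q G) M (Agent.b i) := by
  have hu : ∀ s, utility (redVal q G) M (Agent.a i s) ≤ 1 := fun s => by
    obtain ⟨t, ht, hat, hbt⟩ := h s
    exact utility_a_le_one_s7 hM ht hat hbt
  rcases hst.exists_le_utility (mem_univ (Agent.a i 0)) (mem_univ (Agent.a i 1))
    (mem_univ (Agent.b i)) (by simp) (by simp) (by simp) with h | h | h <;> simp [redVal] at h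
  · linarith [hu 0]
  · linarith [hu 1]
  · linarith

theorem exists_triple_p_p_a (hM : IsMatching univ M) (hst : IsStable univ (redVal q G) M)
    (hcov : ∀ a ∈ univ, ∃ t ∈ M, a ∈ t) (r : Fin (6 * q)) :
    ∃ x y i s, {Agent.p r x, Agent.p r y, Agent.a i s} ∈ M := by
  have hcovP : ∀ r x, ∃ t ∈ M, Agent.p r x ∈ t := fun r x => hcov _ (mem_univ _)
  obtain ⟨x, y, c, hxy, hc, ht⟩ := (isPentagadget_redVal r).exists_triple_notMem_range hM hst
    (fun _ => mem_univ _) (hcovP r)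
  rcases c with ⟨i, s⟩ | j | ⟨r', w⟩
  · exact ⟨x, y, i, s, ht⟩
  · -- `b j` would have utility `0` while neither `a j 0` nor `a j 1` is matched with it
    have hu := two_le_utility_b hM hst fun s => by
      obtain ⟨t, ht', hat⟩ := hcov (Agent.a j s) (mem_univ _)
      refine ⟨t, ht', hat, fun hbt => ?_⟩
      rw [hM.eq_of_mem_of_mem ht' ht hbt (by simp)] at hat
      simp at hat
    rw [hM.utility_eq_add_s7 (a := Agent.b j) (b := Agent.p r x) (c := Agent.p r y) ht
      (by simp) (by simp) (by simp) (by simp) (by simp) (by simp [hxy])] at hu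
    simp [redVal] at hu
  · obtain ⟨w', hw', hmem⟩ := (isPentagadget_redVal r').exists_ne_mem hM hst
      (fun _ => mem_univ _) (hcovP r') (x := w) ht (by simp)
    have hr : r' ≠ r := fun h => hc ⟨w, by rw [h]⟩
    simp [hr, hw'] at hmem

-- The `6q` pentagadgets absorb distinct `a`-agents, and there are only `6q` of those.
theorem exists_mem_a_notMem_b (hM : IsMatching univ M) (hst : IsStable univ (redVal q G) M)
    (hcov : ∀ a ∈ univ, ∃ t ∈ M, a ∈ t) (i : Fin (3 * q)) (s : Fin 2) :
    ∃ t ∈ M, Agent.a i s ∈ t ∧ Agent.b i ∉ t := by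
  choose x y i' s' hmem using exists_triple_p_p_a hM hst hcov
  have hinj : Function.Injective fun r => (i' r, s' r) := by
    intro r r' h
    simp only [Prod.mk.injEq] at h
    have heq := hM.eq_of_mem_of_mem (a := Agent.a (i' r) (s' r)) (hmem r) (hmem r') (by simp)
      (by simp [h.1, h.2])
    have : Agent.p r (x r) ∈ ({Agent.p r' (x r'), Agent.p r' (y r'), Agent.a (i' r') (s' r')} :
        Finset (Agent q)) := heq ▸ by simp
    simp only [Finset.mem_insert, Finset.mem_singleton, Agent.p.injEq, reduceCtorEq] at this
    tauto
  obtain ⟨r, hr⟩ := ((Fintype.bijective_iff_injective_and_card _).2 ⟨hinj, by simp; ring⟩).2 (i, s)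
  simp only [Prod.mk.injEq] at hr
  exact ⟨_, hmem r, by simp [hr.1, hr.2], by simp⟩

end Reduction

/-- In any stable matching of the reduced instance in which every agent is matched, the
triple containing `b_i` is `{b_i, b_j, b_k}` for some `j, k` with `{w_i, w_j} ∈ E` and
`{w_i, w_k} ∈ E`. -/
theorem b_agents_matched_to_adjacent_b_agents
    (q : ℕ) (G : SimpleGraph (Fin (3*q))) [DecidableRel G.Adj]
    (M : Finset (Finset (Agent q)))
    (hM : IsMatching (Finset.univ : Finset (Agent q)) M)
    (hstable : IsStable Finset.univ (redVal q G) M)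
    (hcard : M.card = 13 * q) (i : Fin (3*q)) :
    ∃ j k : Fin (3*q), G.Adj i j ∧ G.Adj i k ∧
      ∃ t ∈ M, Agent.b i ∈ t ∧ t = {Agent.b i, Agent.b j, Agent.b k} := by
  have hcov := hM.exists_mem_of_card_eq (by rw [hcard, card_univ, Agent.card]; ring)
  have ha := exists_mem_a_notMem_b hM hstable hcov i
  have hu := two_le_utility_b hM hstable ha
  obtain ⟨t, ht, hbt⟩ := hcov _ (mem_univ (Agent.b i))
  have hpartner : ∀ m ∈ t, m ≠ Agent.b i → ∃ j, G.Adj i j ∧ m = Agent.b j := fun m hm hne => by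
    rcases redVal_b_eq_one_iff.1
      (hM.val_eq_one_of_two_le_utility (redVal_le_one _) ht hbt hm hne.symm hu) with ⟨s, rfl⟩ | h
    · obtain ⟨t', ht', hat', hbt'⟩ := ha s
      exact absurd (hM.eq_of_mem_of_mem ht ht' hm hat' ▸ hbt) hbt'
    · exact h
  obtain ⟨m₁, m₂, h₁, h₂, -, rfl⟩ := hM.exists_eq_triple ht hbt
  obtain ⟨j, hj, rfl⟩ := hpartner m₁ (by simp) (Ne.symm h₁)
  obtain ⟨k, hk, rfl⟩ := hpartner m₂ (by simp) (Ne.symm h₂)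
  exact ⟨j, k, hj, hk, _, ht, hbt, rfl⟩
end

section
/- Let (N,V) be an instance of 3D-SR-SAS-BIN and let M_A be a stable matching in (N,V) such that for all distinct agents α, β with val_α(β) = 1 we have u_α(M_A) + u_β(M_A) ≥ 1. Then for any three distinct agents h1, h2, h3 with val_{h1}(h2) = val_{h2}(h3) = 1 and val_{h1}(h3) = 0, u_{h1}(M_A) + u_{h2}(M_A) + u_{h3}(M_A) ≥ 2. -/
open Finset

variable {A : Type*}

/-!
Utilities are nonnegative, so the two edge conditions `u₁ + u₂ ≥ 1` and `u₂ + u₃ ≥ 1` leave,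
for a total below `2`, only `u₁ = u₃ = 0` and `u₂ = 1`. Then every agent of the path gains by
forming the triple `{h₁, h₂, h₃}` (utilities `1, 2, 1`), contradicting stability.
-/

section

variable [DecidableEq A] {N : Finset A} {val : A → A → ℤ}

lemma BinSym.val_nonneg (hbs : BinSym N val) {a b : A} (ha : a ∈ N) (hb : b ∈ N)
    (hab : a ≠ b) : 0 ≤ val a b := by
  rcases hbs.1 a ha b hb hab with h | h <;> omega

lemma utility_nonneg (hval : ∀ a ∈ N, ∀ b ∈ N, a ≠ b → 0 ≤ val a b)
    {M : Finset (Finset A)} (hM : ∀ t ∈ M, t ⊆ N) (a : A) : 0 ≤ utility val M a := by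
  refine sum_nonneg fun t ht => sum_nonneg fun b hb => ?_
  obtain ⟨htM, hat⟩ := mem_filter.1 ht
  exact hval a (hM t htM hat) b (hM t htM (mem_of_mem_erase hb)) (ne_of_mem_erase hb).symm

lemma blocks_of_path (hbs : BinSym N val) {M : Finset (Finset A)} {x y z : A}
    (hx : x ∈ N) (hy : y ∈ N) (hz : z ∈ N) (hxy : x ≠ y) (hxz : x ≠ z) (hyz : y ≠ z)
    (hvxy : val x y = 1) (hvyz : val y z = 1) (hvxz : val x z = 0)
    (hux : utility val M x < 1) (huy : utility val M y < 2) (huz : utility val M z < 1) :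
    Blocks N val M x y z := by
  have hvyx : val y x = 1 := hbs.2 y hy x hx ▸ hvxy
  have hvzx : val z x = 0 := hbs.2 z hz x hx ▸ hvxz
  have hvzy : val z y = 1 := hbs.2 z hz y hy ▸ hvyz
  refine ⟨hx, hy, hz, hxy, hxz, hyz, ?_, ?_, ?_⟩ <;> omega

end

/-- If `M_A` is a stable matching of a binary symmetric instance such that any two distinct
agents valuing each other `1` have total utility at least `1`, then the three agents of any
path (`val h1 h2 = val h2 h3 = 1`, `val h1 h3 = 0`) have total utility at least `2`
in `M_A`. -/
theorem path_total_utility_ge_two [DecidableEq A]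
    (N : Finset A) (val : A → A → ℤ) (hbs : BinSym N val)
    (MA : Finset (Finset A)) (hMA : IsMatching N MA) (hst : IsStable N val MA)
    (hprop : ∀ a ∈ N, ∀ b ∈ N, a ≠ b → val a b = 1 →
      1 ≤ utility val MA a + utility val MA b)
    (h1 h2 h3 : A) (hh1 : h1 ∈ N) (hh2 : h2 ∈ N) (hh3 : h3 ∈ N)
    (hne12 : h1 ≠ h2) (hne13 : h1 ≠ h3) (hne23 : h2 ≠ h3)
    (hv12 : val h1 h2 = 1) (hv23 : val h2 h3 = 1) (hv13 : val h1 h3 = 0) :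
    2 ≤ utility val MA h1 + utility val MA h2 + utility val MA h3 := by
  have hnonneg : ∀ a, 0 ≤ utility val MA a :=
    utility_nonneg (fun _ ha _ hb hab => hbs.val_nonneg ha hb hab) fun t ht => (hMA.1 t ht).2
  have h12 := hprop h1 hh1 h2 hh2 hne12 hv12
  have h23 := hprop h2 hh2 h3 hh3 hne23 hv23
  by_contra! hlt
  have hu1 := hnonneg h1
  have hu2 := hnonneg h2
  have hu3 := hnonneg h3
  exact hst h1 h2 h3 <| blocks_of_path hbs hh1 hh2 hh3 hne12 hne13 hne23 hv12 hv23 hv13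
    (by omega) (by omega) (by omega)
end
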